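/- arXiv:1301.0739 — 2 statements merged into one kernel-verified Lean document; each statement's English description precedes it below -/
import Mathlib

section
/- Let K be a connected, locally finite graph with weights c, r, that is complete and homogeneous. Then the Gauß–Bonnet operator D = d + δ, defined on finitely supported cochains in L²(V) ⊕ L²(E), is essentially self-adjoint. -/
open Filter Topology

namespace GaussBonnetGraph

variable {V : Type*}

/-- Local finiteness of a graph: each vertex has finitely many neighbours. -/
def LocFin (G : SimpleGraph V) : Prop := ∀ v : V, (G.neighborSet v).Finite

/-- 1-cochains: odd functions on oriented edges. -/
def IsForm (φ : V → V → ℝ) : Prop := ∀ x y : V, φ y x = - φ x y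

/-- a 1-cochain supported on the (oriented) edges of `G` -/
def SuppEdges (G : SimpleGraph V) (φ : V → V → ℝ) : Prop :=
  ∀ x y : V, ¬ G.Adj x y → φ x y = 0

/-- the difference operator `d f (e) = f e⁺ - f e⁻`, where `e = (x, y)`, `e⁻ = x`, `e⁺ = y`. -/
def dOp (f : V → ℝ) : V → V → ℝ := fun x y => f y - f x

/-- the coboundary operator `δ φ x = (1 / c x) ∑_{e : e⁺ = x} r e * φ e`;
the oriented edges with head `x` are the pairs `(y, x)` with `y` a neighbour of `x`. -/
noncomputable def deltaOp (G : SimpleGraph V) (h : LocFin G) (c : V → ℝ) (r : V → V → ℝ)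
    (φ : V → V → ℝ) (x : V) : ℝ :=
  (1 / c x) * ∑ y ∈ (h x).toFinset, r y x * φ y x

/-- the weighted scalar product of 0-cochains -/
noncomputable def ip0 (c : V → ℝ) (f g : V → ℝ) : ℝ := ∑' v : V, c v * f v * g v

/-- the weighted scalar product of 1-cochains; a dart of `G` is an oriented edge -/
noncomputable def ip1 (G : SimpleGraph V) (r : V → V → ℝ) (φ ψ : V → V → ℝ) : ℝ :=
  (1 / 2) * ∑' e : G.Dart, r e.fst e.snd * φ e.fst e.snd * ψ e.fst e.snd

noncomputable def nrm0 (c : V → ℝ) (f : V → ℝ) : ℝ := Real.sqrt (ip0 c f f)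

noncomputable def nrm1 (G : SimpleGraph V) (r : V → V → ℝ) (φ : V → V → ℝ) : ℝ :=
  Real.sqrt (ip1 G r φ φ)

/-- membership in `L²(V)` -/
def Mem0 (c : V → ℝ) (f : V → ℝ) : Prop := Summable (fun v : V => c v * (f v) ^ 2)

/-- square-summability of a 1-cochain, i.e. membership in `L²(E)` -/
def Mem1 (G : SimpleGraph V) (r : V → V → ℝ) (φ : V → V → ℝ) : Prop :=
  Summable (fun e : G.Dart => r e.fst e.snd * (φ e.fst e.snd) ^ 2)

/-- `f` is in the domain of `d_max`: `d f` is square-summable on the edges -/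
def MemD (G : SimpleGraph V) (r : V → V → ℝ) (f : V → ℝ) : Prop :=
  Mem1 G r (fun x y => dOp f x y)

/-- finite support for 0-cochains -/
def FinSupp0 (f : V → ℝ) : Prop := (Function.support f).Finite

/-- finite support for 1-cochains -/
def FinSupp1 (φ : V → V → ℝ) : Prop := {p : V × V | φ p.1 p.2 ≠ 0}.Finite

/-- the data witnessing completeness of a weighted graph: an exhausting sequence of finite
sets `Bₙ` together with cut-off functions `χₙ`. -/
structure CompleteData (G : SimpleGraph V) where
  B : ℕ → Set V
  chi : ℕ → V → ℝ
  finB : ∀ n, (B n).Finite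
  monoB : Monotone B
  exhausts : ∀ v : V, ∃ n, v ∈ B n
  finsupp_chi : ∀ n, FinSupp0 (chi n)
  chi_nonneg : ∀ n v, 0 ≤ chi n v
  chi_le_one : ∀ n v, chi n v ≤ 1
  chi_eq_one : ∀ n, ∀ v ∈ B n, chi n v = 1
  stab : ∀ p : ℕ, ∃ n₀, ∀ n ≥ n₀, ∀ x y : V, G.Adj x y → (x ∈ B p ∨ y ∈ B p) →
    dOp (chi n) x y = 0

/-- homogeneity of a complete weighted graph: the sum is over all oriented edges `e`
with `e⁺ = x` or `e⁻ = x`. -/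
def Homogeneous (G : SimpleGraph V) (h : LocFin G) (c : V → ℝ) (r : V → V → ℝ)
    (cd : CompleteData G) : Prop :=
  ∃ C > 0, ∀ n : ℕ, ∀ x : V,
    (1 / c x) * ∑ y ∈ (h x).toFinset,
      (r y x * (dOp (cd.chi n) y x) ^ 2 + r x y * (dOp (cd.chi n) x y) ^ 2) ≤ C


/-! Approximate `f` by `uₙ = χₙ f` and `φ` by `wₙ(x, y) = χₙ(x) χₙ(y) φ(x, y)`. Since `χₙ = 1`
near any given vertex for large `n`, every error term eventually vanishes pointwise, so by
dominated convergence it suffices to bound it by a summable function independent of `n`. For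
`uₙ - f` and `wₙ - φ` this follows from `0 ≤ χₙ ≤ 1`. The errors `d uₙ - d f` and `δ wₙ - δ φ`
contain an extra term involving `dχₙ`; grouping the darts by their head `x`, it is bounded by
`f(x)² ∑ r (dχₙ)²`, resp. (Cauchy–Schwarz) by `(∑ r φ²) (∑ r (dχₙ)²) / c(x)`, and homogeneity
gives `∑ r (dχₙ)² ≤ C c(x)` uniformly in `n`. -/

lemma sq_mul_le_sq_of_abs_le_one {s : ℝ} (hs : |s| ≤ 1) (a : ℝ) : (s * a) ^ 2 ≤ a ^ 2 := by
  rw [mul_pow]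
  exact mul_le_of_le_one_left (sq_nonneg a) (sq_le_one_iff_abs_le_one s |>.mpr hs)

lemma sq_mul_add_mul_le_of_abs_le_one {s t : ℝ} (hs : |s| ≤ 1) (ht : |t| ≤ 1) (a b : ℝ) :
    (s * a + t * b) ^ 2 ≤ 2 * a ^ 2 + 2 * b ^ 2 := by
  nlinarith [add_sq_le (a := s * a) (b := t * b), sq_mul_le_sq_of_abs_le_one hs a,
    sq_mul_le_sq_of_abs_le_one ht b]

lemma tendsto_tsum_zero_of_dominated {ι : Type*} {F : ℕ → ι → ℝ} {b : ι → ℝ} (hb : Summable b)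
    (hF : ∀ n i, 0 ≤ F n i) (hle : ∀ n i, F n i ≤ b i) (hev : ∀ i, ∀ᶠ n in atTop, F n i = 0) :
    Tendsto (fun n => ∑' i, F n i) atTop (𝓝 0) := by
  simpa using tendsto_tsum_of_dominated_convergence (g := 0) hb
    (fun i => tendsto_const_nhds.congr' ((hev i).mono fun _ hn => hn.symm))
    (Eventually.of_forall fun n i => (Real.norm_of_nonneg (hF n i)).trans_le (hle n i))

variable {G : SimpleGraph V}

lemma LocFin.adj_of_mem_toFinset (h : LocFin G) {x y : V} (hy : y ∈ (h x).toFinset) :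
    G.Adj x y := by
  simpa using hy

def dartEquivSigmaHead (h : LocFin G) : G.Dart ≃ Σ x : V, (h x).toFinset where
  toFun e := ⟨e.snd, e.fst, by simpa using e.adj.symm⟩
  invFun s := ⟨(s.2.1, s.1), (h.adj_of_mem_toFinset s.2.2).symm⟩
  left_inv _ := rfl
  right_inv _ := rfl

section DartSums

variable (h : LocFin G) {F : V → V → ℝ} (hF : ∀ x y, G.Adj x y → 0 ≤ F x y)
include hF

lemma summable_dart_iff_summable_sum_head :
    Summable (fun e : G.Dart => F e.fst e.snd) ↔
      Summable (fun x => ∑ y ∈ (h x).toFinset, F y x) := by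
  rw [← (dartEquivSigmaHead h).symm.summable_iff, summable_sigma_of_nonneg]
  · refine (and_iff_right fun x => .of_finite).trans ?_
    simp only [Function.comp_def]
    congr! with x
    exact Finset.tsum_subtype _ (F · x)
  · rintro ⟨x, y, hy⟩
    exact hF y x (h.adj_of_mem_toFinset hy).symm

lemma tsum_dart_eq_tsum_sum_head :
    ∑' e : G.Dart, F e.fst e.snd = ∑' x, ∑ y ∈ (h x).toFinset, F y x := by
  by_cases hs : Summable (fun e : G.Dart => F e.fst e.snd)
  · rw [← (dartEquivSigmaHead h).symm.tsum_eq]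
    refine (((dartEquivSigmaHead h).symm.summable_iff.mpr hs).tsum_sigma'
      fun _ => .of_finite).trans ?_
    exact tsum_congr fun x => Finset.tsum_subtype _ (F · x)
  · rw [tsum_eq_zero_of_not_summable hs, tsum_eq_zero_of_not_summable
      ((summable_dart_iff_summable_sum_head h hF).not.mp hs)]

end DartSums

lemma ip0_self (c f : V → ℝ) : ip0 c f f = ∑' v, c v * f v ^ 2 := by
  simp only [ip0, mul_assoc, sq]

lemma ip1_self (r φ : V → V → ℝ) :
    ip1 G r φ φ = 1 / 2 * ∑' e : G.Dart, r e.fst e.snd * φ e.fst e.snd ^ 2 := by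
  simp only [ip1, mul_assoc, sq]

lemma tendsto_nrm0_of_dominated {c : V → ℝ} (hc : ∀ v, 0 ≤ c v) {g : ℕ → V → ℝ} {b : V → ℝ}
    (hb : Summable b) (hle : ∀ n v, c v * g n v ^ 2 ≤ b v)
    (hev : ∀ v, ∀ᶠ n in atTop, g n v = 0) :
    Tendsto (fun n => nrm0 c (g n)) atTop (𝓝 0) := by
  have := tendsto_tsum_zero_of_dominated hb (fun n v => mul_nonneg (hc v) (sq_nonneg (g n v)))
    hle fun v => (hev v).mono fun n hn => by simp [hn]
  simpa only [nrm0, ip0_self, Real.sqrt_zero] using this.sqrt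

lemma tendsto_nrm1_of_dominated {r : V → V → ℝ} (hr : ∀ x y, G.Adj x y → 0 ≤ r x y)
    {ψ : ℕ → V → V → ℝ} {b : G.Dart → ℝ} (hb : Summable b)
    (hle : ∀ n (e : G.Dart), r e.fst e.snd * ψ n e.fst e.snd ^ 2 ≤ b e)
    (hev : ∀ e : G.Dart, ∀ᶠ n in atTop, ψ n e.fst e.snd = 0) :
    Tendsto (fun n => nrm1 G r (ψ n)) atTop (𝓝 0) := by
  have := tendsto_tsum_zero_of_dominated hb
    (fun n e => mul_nonneg (hr _ _ e.adj) (sq_nonneg (ψ n e.fst e.snd)))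
    hle fun e => (hev e).mono fun n hn => by simp [hn]
  simpa only [nrm1, ip1_self, mul_zero, Real.sqrt_zero] using (this.const_mul (1 / 2)).sqrt

lemma tendsto_nrm1_of_dominated_sum_head (h : LocFin G) {r : V → V → ℝ}
    (hr : ∀ x y, G.Adj x y → 0 ≤ r x y) {ψ : ℕ → V → V → ℝ} {b : V → ℝ} (hb : Summable b)
    (hle : ∀ n x, ∑ y ∈ (h x).toFinset, r y x * ψ n y x ^ 2 ≤ b x)
    (hev : ∀ x, ∀ᶠ n in atTop, ∀ y, G.Adj x y → ψ n y x = 0) :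
    Tendsto (fun n => nrm1 G r (ψ n)) atTop (𝓝 0) := by
  have hψ : ∀ n x y, G.Adj x y → 0 ≤ r x y * ψ n x y ^ 2 :=
    fun n x y hxy => mul_nonneg (hr x y hxy) (sq_nonneg _)
  have := tendsto_tsum_zero_of_dominated hb
    (fun n x => Finset.sum_nonneg fun y hy => hψ n y x (h.adj_of_mem_toFinset hy).symm)
    hle fun x => (hev x).mono fun n hn => Finset.sum_eq_zero fun y hy => by
      rw [hn y (h.adj_of_mem_toFinset hy), sq, mul_zero, mul_zero]
  simp_rw [nrm1, ip1_self, tsum_dart_eq_tsum_sum_head h (hψ _)]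
  simpa only [mul_zero, Real.sqrt_zero] using (this.const_mul (1 / 2)).sqrt

lemma FinSupp0.mul {χ : V → ℝ} (hχ : FinSupp0 χ) (f : V → ℝ) : FinSupp0 (fun v => χ v * f v) :=
  hχ.subset (Function.support_mul_subset_left χ f)

lemma FinSupp0.finSupp1_mul_mul {χ : V → ℝ} (hχ : FinSupp0 χ) (φ : V → V → ℝ) :
    FinSupp1 (fun x y => χ x * χ y * φ x y) :=
  (hχ.prod hχ).subset fun _ hxy =>
    ⟨left_ne_zero_of_mul (left_ne_zero_of_mul hxy), right_ne_zero_of_mul (left_ne_zero_of_mul hxy)⟩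

lemma IsForm.mul_mul {φ : V → V → ℝ} (hφ : IsForm φ) (χ : V → ℝ) :
    IsForm (fun x y => χ x * χ y * φ x y) := fun x y => by
  dsimp only
  rw [hφ x y]
  ring

lemma dOp_mul_sub_dOp (χ f : V → ℝ) (x y : V) :
    dOp (fun v => χ v * f v) x y - dOp f x y = (χ x - 1) * dOp f x y + f y * dOp χ x y := by
  simp only [dOp]
  ring

lemma deltaOp_mul_mul_sub_deltaOp (h : LocFin G) (c : V → ℝ) (r : V → V → ℝ) (χ : V → ℝ)
    (φ : V → V → ℝ) (x : V) :
    deltaOp G h c r (fun a b => χ a * χ b * φ a b) x - deltaOp G h c r φ x =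
      (χ x ^ 2 - 1) * deltaOp G h c r φ x +
        -χ x * (1 / c x * ∑ y ∈ (h x).toFinset, r y x * φ y x * dOp χ y x) := by
  simp only [deltaOp, dOp, Finset.mul_sum, ← Finset.sum_sub_distrib, ← Finset.sum_add_distrib]
  exact Finset.sum_congr rfl fun y _ => by ring

lemma Homogeneous.exists_sum_sq_dOp_chi_le {h : LocFin G} {c : V → ℝ} {r : V → V → ℝ}
    {cd : CompleteData G} (hom : Homogeneous G h c r cd) (hc : ∀ v, 0 < c v)
    (hr : ∀ x y, G.Adj x y → 0 ≤ r x y) :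
    ∃ C, ∀ n x, ∑ y ∈ (h x).toFinset, r y x * dOp (cd.chi n) y x ^ 2 ≤ C * c x := by
  obtain ⟨C, -, hC⟩ := hom
  refine ⟨C, fun n x => ?_⟩
  have hCx := hC n x
  rw [one_div, inv_mul_le_iff₀ (hc x), mul_comm] at hCx
  refine (Finset.sum_le_sum fun y hy => ?_).trans hCx
  exact le_add_of_nonneg_right (mul_nonneg (hr x y (h.adj_of_mem_toFinset hy)) (sq_nonneg _))

namespace CompleteData

variable (cd : CompleteData G) {c : V → ℝ} {r : V → V → ℝ}

lemma abs_chi_sub_one_le (n : ℕ) (v : V) : |cd.chi n v - 1| ≤ 1 :=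
  abs_sub_le_of_nonneg_of_le (cd.chi_nonneg n v) (cd.chi_le_one n v) zero_le_one le_rfl

lemma abs_chi_mul_chi_sub_one_le (n : ℕ) (x y : V) : |cd.chi n x * cd.chi n y - 1| ≤ 1 :=
  abs_sub_le_of_nonneg_of_le (mul_nonneg (cd.chi_nonneg n x) (cd.chi_nonneg n y))
    (mul_le_one₀ (cd.chi_le_one n x) (cd.chi_nonneg n y) (cd.chi_le_one n y)) zero_le_one le_rfl

lemma eventually_chi_eq_one (x : V) :
    ∀ᶠ n in atTop, cd.chi n x = 1 ∧ ∀ y, G.Adj x y → cd.chi n y = 1 := by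
  obtain ⟨p, hp⟩ := cd.exhausts x
  obtain ⟨n₀, hn₀⟩ := cd.stab p
  filter_upwards [eventually_ge_atTop p, eventually_ge_atTop n₀] with n hpn hn
  have hx : cd.chi n x = 1 := cd.chi_eq_one n x (cd.monoB hpn hp)
  refine ⟨hx, fun y hxy => ?_⟩
  have hd := hn₀ n hn x y hxy (Or.inl hp)
  rw [dOp, sub_eq_zero] at hd
  rw [hd, hx]

theorem tendsto_nrm0_chi_mul_sub (hc : ∀ v, 0 ≤ c v) {f : V → ℝ} (hf : Mem0 c f) :
    Tendsto (fun n => nrm0 c (fun v => cd.chi n v * f v - f v)) atTop (𝓝 0) := by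
  refine tendsto_nrm0_of_dominated hc hf (fun n v => ?_) fun v => ?_
  · rw [← sub_one_mul]
    exact mul_le_mul_of_nonneg_left
      (sq_mul_le_sq_of_abs_le_one (cd.abs_chi_sub_one_le n v) _) (hc v)
  · filter_upwards [cd.eventually_chi_eq_one v] with n hn
    rw [hn.1, one_mul, sub_self]

theorem tendsto_nrm1_chi_mul_chi_mul_sub (hr : ∀ x y, G.Adj x y → 0 ≤ r x y)
    {φ : V → V → ℝ} (hφ : Mem1 G r φ) :
    Tendsto (fun n => nrm1 G r (fun x y => cd.chi n x * cd.chi n y * φ x y - φ x y))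
      atTop (𝓝 0) := by
  refine tendsto_nrm1_of_dominated hr hφ (fun n e => ?_) fun e => ?_
  · rw [← sub_one_mul]
    exact mul_le_mul_of_nonneg_left
      (sq_mul_le_sq_of_abs_le_one (cd.abs_chi_mul_chi_sub_one_le n _ _) _) (hr _ _ e.adj)
  · filter_upwards [cd.eventually_chi_eq_one e.fst] with n hn
    rw [hn.1, hn.2 _ e.adj, one_mul, one_mul, sub_self]

theorem tendsto_nrm1_dOp_chi_mul_sub (h : LocFin G) (hc : ∀ v, 0 < c v)
    (hr : ∀ x y, G.Adj x y → 0 ≤ r x y) (hom : Homogeneous G h c r cd) {f : V → ℝ}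
    (hf : Mem0 c f) (hdf : MemD G r f) :
    Tendsto (fun n => nrm1 G r (fun x y => dOp (fun v => cd.chi n v * f v) x y - dOp f x y))
      atTop (𝓝 0) := by
  obtain ⟨C, hC⟩ := hom.exists_sum_sq_dOp_chi_le hc hr
  have hdf' := (summable_dart_iff_summable_sum_head h
    fun x y hxy => mul_nonneg (hr x y hxy) (sq_nonneg (dOp f x y))).mp hdf
  refine tendsto_nrm1_of_dominated_sum_head h hr ((hdf'.mul_left 2).add (hf.mul_left (2 * C)))
    (fun n x => ?_) fun x => ?_
  · calc ∑ y ∈ (h x).toFinset, r y x * (dOp (fun v => cd.chi n v * f v) y x - dOp f y x) ^ 2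
        ≤ ∑ y ∈ (h x).toFinset,
            (2 * (r y x * dOp f y x ^ 2) + 2 * f x ^ 2 * (r y x * dOp (cd.chi n) y x ^ 2)) := by
          refine Finset.sum_le_sum fun y hy => ?_
          have hyx := hr y x (h.adj_of_mem_toFinset hy).symm
          have := mul_le_mul_of_nonneg_left (sq_mul_add_mul_le_of_abs_le_one
            (cd.abs_chi_sub_one_le n y) abs_one.le (dOp f y x) (f x * dOp (cd.chi n) y x)) hyx
          rw [dOp_mul_sub_dOp]
          linear_combination this
      _ ≤ 2 * ∑ y ∈ (h x).toFinset, r y x * dOp f y x ^ 2 + 2 * f x ^ 2 * (C * c x) := by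
          rw [Finset.sum_add_distrib, ← Finset.mul_sum, ← Finset.mul_sum]
          gcongr
          exact hC n x
      _ = 2 * ∑ y ∈ (h x).toFinset, r y x * dOp f y x ^ 2 + 2 * C * (c x * f x ^ 2) := by ring
  · filter_upwards [cd.eventually_chi_eq_one x] with n hn y hxy
    simp only [dOp, hn.1, hn.2 y hxy]
    ring

theorem tendsto_nrm0_deltaOp_chi_mul_chi_mul_sub (h : LocFin G) (hc : ∀ v, 0 < c v)
    (hr : ∀ x y, G.Adj x y → 0 ≤ r x y) (hom : Homogeneous G h c r cd) {φ : V → V → ℝ}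
    (hφ : Mem1 G r φ) (hδφ : Mem0 c (deltaOp G h c r φ)) :
    Tendsto (fun n => nrm0 c (fun v =>
      deltaOp G h c r (fun x y => cd.chi n x * cd.chi n y * φ x y) v - deltaOp G h c r φ v))
      atTop (𝓝 0) := by
  obtain ⟨C, hC⟩ := hom.exists_sum_sq_dOp_chi_le hc hr
  have hrφ : ∀ x y, G.Adj x y → 0 ≤ r x y * φ x y ^ 2 :=
    fun x y hxy => mul_nonneg (hr x y hxy) (sq_nonneg _)
  have hφ' := (summable_dart_iff_summable_sum_head h hrφ).mp hφ
  refine tendsto_nrm0_of_dominated (fun v => (hc v).le)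
    ((hδφ.mul_left 2).add (hφ'.mul_left (2 * C))) (fun n x => ?_) fun x => ?_
  · set S := ∑ y ∈ (h x).toFinset, r y x * φ y x * dOp (cd.chi n) y x
    set P := ∑ y ∈ (h x).toFinset, r y x * φ y x ^ 2
    have hP : 0 ≤ P := Finset.sum_nonneg fun y hy => hrφ y x (h.adj_of_mem_toFinset hy).symm
    have hCS : S ^ 2 ≤ P * ∑ y ∈ (h x).toFinset, r y x * dOp (cd.chi n) y x ^ 2 :=
      Finset.sum_sq_le_sum_mul_sum_of_sq_le_mul _
        (fun y hy => hrφ y x (h.adj_of_mem_toFinset hy).symm)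
        (fun y hy => mul_nonneg (hr y x (h.adj_of_mem_toFinset hy).symm) (sq_nonneg _))
        fun y _ => le_of_eq (by ring)
    have hS : c x * (1 / c x * S) ^ 2 ≤ C * P := by
      rw [show c x * (1 / c x * S) ^ 2 = S ^ 2 / c x by field_simp, div_le_iff₀ (hc x)]
      exact hCS.trans ((mul_le_mul_of_nonneg_left (hC n x) hP).trans_eq (by ring))
    have hχ : |-cd.chi n x| ≤ 1 := by
      rw [abs_neg, abs_of_nonneg (cd.chi_nonneg n x)]
      exact cd.chi_le_one n x
    have hχ2 : |cd.chi n x ^ 2 - 1| ≤ 1 := by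
      rw [sq]
      exact cd.abs_chi_mul_chi_sub_one_le n x x
    have := mul_le_mul_of_nonneg_left (sq_mul_add_mul_le_of_abs_le_one hχ2 hχ
      (deltaOp G h c r φ x) (1 / c x * S)) (hc x).le
    rw [deltaOp_mul_mul_sub_deltaOp]
    linear_combination this + 2 * hS
  · filter_upwards [cd.eventually_chi_eq_one x] with n hn
    rw [deltaOp_mul_mul_sub_deltaOp, hn.1, Finset.sum_eq_zero fun y hy => by
      rw [dOp, hn.1, hn.2 y (h.adj_of_mem_toFinset hy), sub_self, mul_zero]]
    ring

end CompleteData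

theorem gaussBonnet_essentially_selfAdjoint_of_complete_homogeneous_general
    (G : SimpleGraph V) (h : LocFin G)
    (c : V → ℝ) (r : V → V → ℝ) (hc : ∀ v, 0 < c v)
    (hr : ∀ x y, G.Adj x y → 0 < r x y)
    (cd : CompleteData G) (hom : Homogeneous G h c r cd) :
    ∀ (f : V → ℝ) (φ : V → V → ℝ), Mem0 c f → MemD G r f → IsForm φ → Mem1 G r φ →
      Mem0 c (deltaOp G h c r φ) →
      ∃ (u : ℕ → V → ℝ) (w : ℕ → V → V → ℝ),
        (∀ n, FinSupp0 (u n)) ∧ (∀ n, IsForm (w n) ∧ FinSupp1 (w n)) ∧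
        Tendsto (fun n => nrm0 c (fun v => u n v - f v)) atTop (𝓝 0) ∧
        Tendsto (fun n => nrm1 G r (fun x y => w n x y - φ x y)) atTop (𝓝 0) ∧
        Tendsto (fun n => nrm1 G r (fun x y => dOp (u n) x y - dOp f x y)) atTop (𝓝 0) ∧
        Tendsto (fun n => nrm0 c
          (fun v => deltaOp G h c r (w n) v - deltaOp G h c r φ v)) atTop (𝓝 0) := by
  intro f φ hf hdf hφ hφ₂ hδφ
  have hr₀ : ∀ x y, G.Adj x y → 0 ≤ r x y := fun x y hxy => (hr x y hxy).le
  exact ⟨fun n v => cd.chi n v * f v, fun n x y => cd.chi n x * cd.chi n y * φ x y,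
    fun n => (cd.finsupp_chi n).mul f,
    fun n => ⟨hφ.mul_mul (cd.chi n), (cd.finsupp_chi n).finSupp1_mul_mul φ⟩,
    cd.tendsto_nrm0_chi_mul_sub (fun v => (hc v).le) hf,
    cd.tendsto_nrm1_chi_mul_chi_mul_sub hr₀ hφ₂,
    cd.tendsto_nrm1_dOp_chi_mul_sub h hc hr₀ hom hf hdf,
    cd.tendsto_nrm0_deltaOp_chi_mul_chi_mul_sub h hc hr₀ hom hφ₂ hδφ⟩

/-- on a connected, locally finite, complete and homogeneous weighted graph the
Gauß–Bonnet operator `D = d + δ`, defined on finitely supported cochains, is essentially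
self-adjoint: every pair `(f, φ)` in the domain of the adjoint `D*` (equivalently, with
`f, d f, φ, δ φ` all square-summable) is approximated in graph norm by finitely supported
cochains. -/
theorem gaussBonnet_essentially_selfAdjoint_of_complete_homogeneous
    (G : SimpleGraph V) (hG : G.Connected) (h : LocFin G)
    (c : V → ℝ) (r : V → V → ℝ) (hc : ∀ v, 0 < c v)
    (hr : ∀ x y, G.Adj x y → 0 < r x y) (hrs : ∀ x y : V, r x y = r y x)
    (cd : CompleteData G) (hom : Homogeneous G h c r cd) :
    ∀ (f : V → ℝ) (φ : V → V → ℝ), Mem0 c f → MemD G r f → IsForm φ → Mem1 G r φ →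
      Mem0 c (deltaOp G h c r φ) →
      ∃ (u : ℕ → V → ℝ) (w : ℕ → V → V → ℝ),
        (∀ n, FinSupp0 (u n)) ∧ (∀ n, IsForm (w n) ∧ FinSupp1 (w n)) ∧
        Tendsto (fun n => nrm0 c (fun v => u n v - f v)) atTop (𝓝 0) ∧
        Tendsto (fun n => nrm1 G r (fun x y => w n x y - φ x y)) atTop (𝓝 0) ∧
        Tendsto (fun n => nrm1 G r (fun x y => dOp (u n) x y - dOp f x y)) atTop (𝓝 0) ∧
        Tendsto (fun n => nrm0 c
          (fun v => deltaOp G h c r (w n) v - deltaOp G h c r φ v)) atTop (𝓝 0) :=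
  gaussBonnet_essentially_selfAdjoint_of_complete_homogeneous_general G h c r hc hr cd hom

end GaussBonnetGraph
end

section
/- Let K be a complete homogeneous connected locally finite weighted graph (with the cutoff functions χₙ). Then for all f ∈ Dom(d_max) and φ ∈ Dom(δ_max), the 'boundary term' vanishes: limₙ Σ_{e∈E} r(e) f(e⁻) dχₙ(e) φ(e) = 0. -/
/-!
The boundary term is `∑ₑ gₙ e` with `gₙ = r · f(e⁻) · dχₙ · φ`, and
`gₙ² = (r φ²) · (r f(e⁻)² (dχₙ)²)`. Summing the second factor over the edges leaving each
vertex, homogeneity bounds its total mass by `C ‖f‖²` uniformly in `n`. Cauchy–Schwarz then gives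
`(∑ₑ gₙ e)² ≤ C ‖f‖² · ∑_{e ∈ supp gₙ} r φ²`, and the last sum tends to `0` by dominated
convergence, since `dχₙ` eventually vanishes on every fixed edge.
-/

open Filter Topology

namespace GaussBonnetGraph

variable {V : Type*}

theorem tsum_sq_le_tsum_mul_tsum_of_sq_le_mul {ι : Type*} {g a b : ι → ℝ}
    (ha : ∀ i, 0 ≤ a i) (hb : ∀ i, 0 ≤ b i) (has : Summable a) (hbs : Summable b)
    (hg : ∀ i, g i ^ 2 ≤ a i * b i) :
    (∑' i, g i) ^ 2 ≤ (∑' i, a i) * ∑' i, b i := by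
  have hgs : Summable g := by
    refine Summable.of_norm_bounded ((has.add hbs).div_const 2) fun i => ?_
    rw [Real.norm_eq_abs]
    refine abs_le_of_sq_le_sq ?_ (by linarith [ha i, hb i])
    nlinarith [hg i, sq_nonneg (a i - b i)]
  exact le_of_tendsto_of_tendsto' (hgs.hasSum.pow 2) (Tendsto.mul has.hasSum hbs.hasSum)
    fun s => Finset.sum_sq_le_sum_mul_sum_of_sq_le_mul s (fun i _ => ha i) (fun i _ => hb i)
      fun i _ => hg i

theorem tendsto_tsum_zero_of_sq_le_mul {α ι : Type*} {l : Filter α} {a : ι → ℝ}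
    {b g : α → ι → ℝ} {K : ℝ} (ha : ∀ i, 0 ≤ a i) (has : Summable a)
    (hb : ∀ n i, 0 ≤ b n i) (hbs : ∀ n, Summable (b n)) (hbK : ∀ n, ∑' i, b n i ≤ K)
    (hg : ∀ n i, g n i ^ 2 ≤ a i * b n i) (hg_zero : ∀ i, ∀ᶠ n in l, g n i = 0) :
    Tendsto (fun n => ∑' i, g n i) l (𝓝 0) := by
  set a' : α → ι → ℝ := fun n => (Function.support (g n)).indicator a
  have ha'_nonneg : ∀ n i, 0 ≤ a' n i := fun n => Set.indicator_nonneg fun i _ => ha i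
  have ha'_le : ∀ n i, a' n i ≤ a i := fun n => Set.indicator_le_self' fun i _ => ha i
  have hg' : ∀ n i, g n i ^ 2 ≤ a' n i * b n i := by
    intro n i
    by_cases hi : g n i = 0
    · simp [hi, a']
    · simpa [a', Set.indicator_of_mem (Function.mem_support.2 hi)] using hg n i
  have ha'_tendsto : Tendsto (fun n => ∑' i, a' n i) l (𝓝 0) := by
    have := tendsto_tsum_of_dominated_convergence (f := a') (g := fun _ => 0) has
      (fun i => tendsto_const_nhds.congr' <| (hg_zero i).mono fun n hn => by simp [a', hn])
      (Eventually.of_forall fun n i => by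
        rw [Real.norm_of_nonneg (ha'_nonneg n i)]; exact ha'_le n i)
    simpa using this
  have hsq : ∀ n, (∑' i, g n i) ^ 2 ≤ (∑' i, a' n i) * K := fun n =>
    (tsum_sq_le_tsum_mul_tsum_of_sq_le_mul (ha'_nonneg n) (hb n)
      (has.of_nonneg_of_le (ha'_nonneg n) (ha'_le n)) (hbs n) (hg' n)).trans <|
      mul_le_mul_of_nonneg_left (hbK n) (tsum_nonneg (ha'_nonneg n))
  refine squeeze_zero_norm (fun n => (Real.abs_le_sqrt (hsq n))) ?_
  simpa using (ha'_tendsto.mul_const K).sqrt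

def _root_.SimpleGraph.dartEquivSigma (G : SimpleGraph V) : G.Dart ≃ Σ x, G.neighborSet x where
  toFun d := ⟨d.fst, d.snd, d.adj⟩
  invFun s := ⟨(s.1, s.2), s.2.2⟩
  left_inv _ := rfl
  right_inv _ := rfl

theorem _root_.Set.Finite.tsum_subtype {α β : Type*} [AddCommMonoid α] [TopologicalSpace α]
    {s : Set β} (hs : s.Finite) (f : β → α) :
    ∑' x : s, f x = ∑ x ∈ hs.toFinset, f x := by
  conv_lhs => rw [← hs.coe_toFinset]
  exact Finset.tsum_subtype' _ _

theorem LocFin.summable_and_tsum_dart_le {G : SimpleGraph V} (h : LocFin G) {F : V → V → ℝ}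
    {w : V → ℝ} (hF : ∀ x y, G.Adj x y → 0 ≤ F x y) (hw : Summable w)
    (hFw : ∀ x, ∑ y ∈ (h x).toFinset, F x y ≤ w x) :
    Summable (fun e : G.Dart => F e.fst e.snd) ∧ ∑' e : G.Dart, F e.fst e.snd ≤ ∑' x, w x := by
  set F' : (Σ x, G.neighborSet x) → ℝ := fun p => F p.1 p.2
  have hF' : ∀ p, 0 ≤ F' p := fun p => hF _ _ p.2.2
  have hfiber : ∀ x, ∑' y : G.neighborSet x, F' ⟨x, y⟩ ≤ w x := fun x =>
    ((h x).tsum_subtype (F x)).trans_le (hFw x)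
  have hF's : Summable F' := (summable_sigma_of_nonneg hF').2
    ⟨fun x => have := (h x).to_subtype; .of_finite,
      hw.of_nonneg_of_le (fun x => tsum_nonneg fun y => hF' _) hfiber⟩
  refine ⟨G.dartEquivSigma.summable_iff.2 hF's, ?_⟩
  calc ∑' e : G.Dart, F e.fst e.snd = ∑' p, F' p := G.dartEquivSigma.tsum_eq F'
    _ = ∑' x, ∑' y : G.neighborSet x, F' ⟨x, y⟩ := hF's.tsum_sigma
    _ ≤ ∑' x, w x := hF's.sigma.tsum_le_tsum hfiber hw

theorem CompleteData.eventually_dOp_chi_eq_zero {G : SimpleGraph V} (cd : CompleteData G)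
    {x y : V} (hxy : G.Adj x y) : ∀ᶠ n in atTop, dOp (cd.chi n) x y = 0 := by
  obtain ⟨p, hp⟩ := cd.exhausts x
  obtain ⟨n₀, hn₀⟩ := cd.stab p
  exact eventually_atTop.2 ⟨n₀, fun n hn => hn₀ n hn x y hxy (Or.inl hp)⟩

theorem Homogeneous.exists_sum_le {G : SimpleGraph V} {h : LocFin G} {c : V → ℝ}
    {r : V → V → ℝ} {cd : CompleteData G} (hom : Homogeneous G h c r cd) (hc : ∀ v, 0 < c v)
    (hr : ∀ x y, G.Adj x y → 0 ≤ r x y) :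
    ∃ C, ∀ n x, ∑ y ∈ (h x).toFinset, r x y * dOp (cd.chi n) x y ^ 2 ≤ C * c x := by
  obtain ⟨C, -, hC⟩ := hom
  refine ⟨C, fun n x => ?_⟩
  have h_out_le : ∑ y ∈ (h x).toFinset, r x y * dOp (cd.chi n) x y ^ 2 ≤
      ∑ y ∈ (h x).toFinset, (r y x * dOp (cd.chi n) y x ^ 2 + r x y * dOp (cd.chi n) x y ^ 2) :=
    Finset.sum_le_sum fun y hy => le_add_of_nonneg_left <|
      mul_nonneg (hr y x ((h x).mem_toFinset.1 hy).symm) (sq_nonneg _)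
  have h_all_le := (inv_mul_le_iff₀ (hc x)).1 (by simpa only [one_div] using hC n x)
  exact h_out_le.trans (h_all_le.trans_eq (mul_comm _ _))

theorem boundary_term_vanishes_general (G : SimpleGraph V) (h : LocFin G)
    (c : V → ℝ) (r : V → V → ℝ) (hc : ∀ v, 0 < c v)
    (hr : ∀ x y, G.Adj x y → 0 < r x y)
    (cd : CompleteData G) (hom : Homogeneous G h c r cd)
    (f : V → ℝ) (hf : Mem0 c f)
    (φ : V → V → ℝ) (hφ2 : Mem1 G r φ) :
    Tendsto (fun n => ∑' e : G.Dart,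
      r e.fst e.snd * f e.fst * dOp (cd.chi n) e.fst e.snd * φ e.fst e.snd)
      atTop (𝓝 0) := by
  have hr' : ∀ x y, G.Adj x y → 0 ≤ r x y := fun x y hxy => (hr x y hxy).le
  obtain ⟨C, hC⟩ := hom.exists_sum_le hc hr'
  have hb_mass := fun n => h.summable_and_tsum_dart_le
    (F := fun x y => f x ^ 2 * (r x y * dOp (cd.chi n) x y ^ 2))
    (fun x y hxy => by have := hr' x y hxy; positivity) (hf.mul_left C) fun x =>
      (Finset.mul_sum _ _ _).symm.trans_le <|
        (mul_le_mul_of_nonneg_left (hC n x) (sq_nonneg _)).trans_eq (by ring)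
  refine tendsto_tsum_zero_of_sq_le_mul (a := fun e : G.Dart => r e.fst e.snd * φ e.fst e.snd ^ 2)
    (fun e => mul_nonneg (hr' _ _ e.adj) (sq_nonneg _)) hφ2
    (fun n e => by have := hr' _ _ e.adj; positivity) (fun n => (hb_mass n).1) (fun n => (hb_mass n).2)
    (fun n e => le_of_eq (by ring)) fun e => (cd.eventually_dOp_chi_eq_zero e.adj).mono
      fun n hn => by simp [hn]

/-- on a complete homogeneous graph the boundary term vanishes:
for `f ∈ Dom d_max` and `φ ∈ Dom δ_max`,
`limₙ Σ_{e ∈ E} r e · f(e⁻) · dχₙ(e) · φ(e) = 0`. -/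
theorem boundary_term_vanishes (G : SimpleGraph V) (hG : G.Connected) (h : LocFin G)
    (c : V → ℝ) (r : V → V → ℝ) (hc : ∀ v, 0 < c v)
    (hr : ∀ x y, G.Adj x y → 0 < r x y) (hrs : ∀ x y : V, r x y = r y x)
    (cd : CompleteData G) (hom : Homogeneous G h c r cd)
    (f : V → ℝ) (hf : Mem0 c f) (hdf : MemD G r f)
    (φ : V → V → ℝ) (hφ : IsForm φ) (hφ2 : Mem1 G r φ) (hδφ : Mem0 c (deltaOp G h c r φ)) :
    Tendsto (fun n => ∑' e : G.Dart,
      r e.fst e.snd * f e.fst * dOp (cd.chi n) e.fst e.snd * φ e.fst e.snd)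
      atTop (𝓝 0) :=
  boundary_term_vanishes_general G h c r hc hr cd hom f hf φ hφ2

end GaussBonnetGraph
end
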